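/- arXiv:2106.03855 — 3 statements merged into one kernel-verified Lean document; each statement's English description precedes it below -/
import Mathlib

section
/- Let q ≠ 1 and suppose F is differentiable at x with 1+(1-q)x > 0. Then the limit as y → x of (F(x) - F(y))/(ln E_q(x) - ln E_q(y)), where E_q(t) = |1+(1-q)t|^{1/(1-q)}, equals (1+(1-q)x)·F'(x). -/
/-- `E_q(t) = |1+(1-q)t|^{1/(1-q)}` -/
noncomputable def Eq' (q t : ℝ) : ℝ := |1 + (1 - q) * t| ^ (1 / (1 - q))

open Filter Topology

theorem tendsto_sub_div_sub_of_hasDerivAt {F G : ℝ → ℝ} {f' g' x : ℝ}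
    (hF : HasDerivAt F f' x) (hG : HasDerivAt G g' x) (hg' : g' ≠ 0) :
    Tendsto (fun y => (F x - F y) / (G x - G y)) (𝓝[≠] x) (𝓝 (f' / g')) := by
  refine ((hasDerivAt_iff_tendsto_slope.mp hF).div
    (hasDerivAt_iff_tendsto_slope.mp hG) hg').congr' ?_
  filter_upwards [self_mem_nhdsWithin] with y hy
  rw [Pi.div_apply, slope_def_field, slope_def_field, div_div_div_cancel_right₀ (sub_ne_zero.mpr hy),
    ← neg_sub (F x), ← neg_sub (G x), neg_div_neg_eq]

theorem log_Eq'_of_pos {q t : ℝ} (ht : 0 < 1 + (1 - q) * t) :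
    Real.log (Eq' q t) = 1 / (1 - q) * Real.log (1 + (1 - q) * t) := by
  rw [Eq', abs_of_pos ht, Real.log_rpow ht]

theorem hasDerivAt_log_Eq' {q x : ℝ} (hq : q ≠ 1) (hx : 0 < 1 + (1 - q) * x) :
    HasDerivAt (fun y => Real.log (Eq' q y)) (1 + (1 - q) * x)⁻¹ x := by
  have hq' : 1 - q ≠ 0 := sub_ne_zero.mpr hq.symm
  have hlin : HasDerivAt (fun y => 1 + (1 - q) * y) (1 - q) x := by
    simpa using ((hasDerivAt_id x).const_mul (1 - q)).const_add 1
  have hpos : ∀ᶠ y in 𝓝 x, 0 < 1 + (1 - q) * y :=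
    hlin.continuousAt.eventually (lt_mem_nhds hx)
  refine (((hlin.log hx.ne').const_mul (1 / (1 - q))).congr_deriv ?_).congr_of_eventuallyEq
    (hpos.mono fun y hy => log_Eq'_of_pos hy)
  field_simp

theorem primal_q_deriv_eq (q x f' : ℝ) (F : ℝ → ℝ) (hq : q ≠ 1)
    (hF : HasDerivAt F f' x) (hx : 0 < 1 + (1 - q) * x) :
    Filter.Tendsto (fun y => (F x - F y) / (Real.log (Eq' q x) - Real.log (Eq' q y)))
      (nhdsWithin x {x}ᶜ) (nhds ((1 + (1 - q) * x) * f')) := by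
  have h := tendsto_sub_div_sub_of_hasDerivAt hF (hasDerivAt_log_Eq' hq hx)
    (inv_ne_zero hx.ne')
  rwa [div_inv_eq_mul, mul_comm] at h
end

section
/- For q ≠ 1, q > 0, and x with 1+(1-q)x > 0, the primal q-derivative of the q-exponential is itself: lim_{y→x} (exp_q(x) - exp_q(y))/(ln E_q(x) - ln E_q(y)) = exp_q(x), where E_q(t) = |1+(1-q)t|^{1/(1-q)} and exp_q(t) = (1+(1-q)t)^{1/(1-q)}. -/
noncomputable def qexp (q t : ℝ) : ℝ := (1 + (1 - q) * t) ^ (1 / (1 - q))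

theorem primal_q_deriv_qexp (q x : ℝ) (hq : q ≠ 1) (hq' : 0 < q)
    (hx : 0 < 1 + (1 - q) * x) :
    Filter.Tendsto (fun y => (qexp q x - qexp q y) / (Real.log (Eq' q x) - Real.log (Eq' q y)))
      (nhdsWithin x {x}ᶜ) (nhds (qexp q x)) := by
  have hc : (1 : ℝ) - q ≠ 0 := sub_ne_zero.mpr (Ne.symm hq)
  set c := 1 - q with hcdef
  set g : ℝ → ℝ := fun y => (1/c) * Real.log (1 + c*y) with hg
  set a := g x with ha
  -- g y = log (Eq' q y) for 0 < 1 + c*y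
  have hlogEq : ∀ y : ℝ, 0 < 1 + c * y → Real.log (Eq' q y) = g y := by
    intro y hy
    have habs : (0:ℝ) < |1 + c * y| := abs_pos.mpr hy.ne'
    simp only [Eq', hg, ← hcdef]
    rw [Real.log_rpow habs, abs_of_pos hy]
  have hqexp : ∀ y : ℝ, 0 < 1 + c * y → qexp q y = Real.exp (g y) := by
    intro y hy
    simp only [qexp, hg, ← hcdef]
    rw [Real.rpow_def_of_pos hy, mul_comm]
  have h1 : Filter.Tendsto (slope Real.exp a) (nhdsWithin a {a}ᶜ) (nhds (Real.exp a)) :=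
    hasDerivAt_iff_tendsto_slope.mp (Real.hasDerivAt_exp a)
  have hopen : IsOpen {y : ℝ | 0 < 1 + c * y} :=
    isOpen_lt continuous_const (by continuity)
  have hmem : {y : ℝ | 0 < 1 + c * y} ∈ nhds x := hopen.mem_nhds hx
  have hcont : ContinuousAt g x := by
    apply ContinuousAt.mul continuousAt_const
    exact ContinuousAt.log (by fun_prop) hx.ne'
  have hinj : ∀ y : ℝ, 0 < 1 + c * y → g y = a → y = x := by
    intro y hy hgy
    have h2 : Real.log (1 + c*y) = Real.log (1 + c*x) :=
      mul_left_cancel₀ (one_div_ne_zero hc) hgy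
    have h3 : 1 + c*y = 1 + c*x := by
      rw [← Real.exp_log hy, ← Real.exp_log hx, h2]
    have := mul_left_cancel₀ hc (by linarith : c*y = c*x)
    exact this
  have h2 : Filter.Tendsto g (nhdsWithin x {x}ᶜ) (nhdsWithin a {a}ᶜ) := by
    rw [tendsto_nhdsWithin_iff]
    constructor
    · exact hcont.tendsto.mono_left nhdsWithin_le_nhds
    · filter_upwards [self_mem_nhdsWithin, mem_nhdsWithin_of_mem_nhds hmem] with y hy1 hy2
      intro hgy
      exact hy1 (hinj y hy2 hgy)
  have key : Filter.Tendsto ((slope Real.exp a) ∘ g) (nhdsWithin x {x}ᶜ)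
      (nhds (Real.exp a)) := h1.comp h2
  have hax : Real.exp a = qexp q x := (hqexp x hx).symm
  rw [← hax]
  apply key.congr'
  filter_upwards [self_mem_nhdsWithin, mem_nhdsWithin_of_mem_nhds hmem] with y hy1 hy2
  simp only [Function.comp_apply]
  rw [slope_def_field, hqexp y hy2, hlogEq x hx, hlogEq y hy2, ← ha]
  rw [← neg_sub (Real.exp (g y)) (Real.exp a), ← neg_sub (g y) a, neg_div_neg_eq]
end

section
/- Let q ≠ 1 and let F be differentiable at x with 1 + (1-q)F(x) > 0. Then lim_{y→x} (ln(exp_q F(x)) - ln(exp_q F(y)))/(x - y) = F'(x)/(1+(1-q)F(x)). -/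
open Filter Topology

theorem log_qexp_eq {q t : ℝ} (ht : 0 < 1 + (1 - q) * t) :
    Real.log (qexp q t) = Real.log (1 + (1 - q) * t) / (1 - q) := by
  rw [qexp, Real.log_rpow ht, one_div_mul_eq_div]

theorem HasDerivAt.log_qexp {q x f' : ℝ} {F : ℝ → ℝ} (hq : q ≠ 1) (hF : HasDerivAt F f' x)
    (hFx : 0 < 1 + (1 - q) * F x) :
    HasDerivAt (fun y => Real.log (qexp q (F y))) (f' / (1 + (1 - q) * F x)) x := by
  have hq' : 1 - q ≠ 0 := sub_ne_zero.mpr hq.symm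
  have hbase : HasDerivAt (fun y => 1 + (1 - q) * F y) ((1 - q) * f') x :=
    (hF.const_mul (1 - q)).const_add 1
  have hpos : ∀ᶠ y in 𝓝 x, 0 < 1 + (1 - q) * F y :=
    hbase.continuousAt.eventually (lt_mem_nhds hFx)
  have hlog := (hbase.log hFx.ne').div_const (1 - q)
  refine (hlog.congr_of_eventuallyEq ?_).congr_deriv ?_
  · filter_upwards [hpos] with y hy using log_qexp_eq hy
  · field_simp

theorem dual_q_deriv_eq (q x f' : ℝ) (F : ℝ → ℝ) (hq : q ≠ 1)
    (hF : HasDerivAt F f' x) (hFx : 0 < 1 + (1 - q) * F x) :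
    Filter.Tendsto
      (fun y => (Real.log (qexp q (F x)) - Real.log (qexp q (F y))) / (x - y))
      (nhdsWithin x {x}ᶜ) (nhds (f' / (1 + (1 - q) * F x))) := by
  refine (hasDerivAt_iff_tendsto_slope.mp (hF.log_qexp hq hFx)).congr fun y => ?_
  rw [slope_comm, slope_def_field]
end
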